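/- Let E be a real Banach space with E = V ⊕ X, where V is finite dimensional. Suppose there exist real constants R > ρ > 0, α > ω, and e ∈ X with ||e|| = 1 such that I ∈ C¹(E,ℝ) satisfies: (I1) I(u) ≥ α for all u ∈ X with ||u|| = ρ; (I2) setting Q := (B̄_R ∩ V) ⊕ {re : 0 ≤ r ≤ R}, there exists h₀ ∈ C(Q,E) such that (i) sup_{u∈Q} I(h₀(u)) < +∞, (ii) sup_{u∈∂Q} I(h₀(u)) = ω, (iii) h₀(∂Q) ∩ (∂B_ρ ∩ X) = ∅, and (iv) there exists a unique w ∈ h₀(Q) ∩ (∂B_ρ ∩ X) and the Brouwer degree deg(h₀, int(Q), w) ≠ 0. Then I possesses a Cerami sequence at a level c ≥ α, which can be characterized as c := inf_{h∈Γ} max_{u∈Q} I(h(u)), where Γ := {h ∈ C(Q,E) : h|_{∂Q} = h₀}. -/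

import Mathlib

open MeasureTheory Filter Metric Set
open scoped Topology

noncomputable section

namespace LinkingAux

variable {E : Type*} [NormedAddCommGroup E]

/-- cost of a single segment: `‖y-z‖ / (1 + min ‖y‖ ‖z‖)`. -/
def seg (y z : E) : ℝ := ‖y - z‖ / (1 + min ‖y‖ ‖z‖)

lemma seg_nonneg (y z : E) : 0 ≤ seg y z := by
  apply div_nonneg (norm_nonneg _)
  have : (0:ℝ) ≤ min ‖y‖ ‖z‖ := le_min (norm_nonneg _) (norm_nonneg _)
  linarith

lemma one_add_min_pos (y z : E) : 0 < 1 + min ‖y‖ ‖z‖ := by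
  have : (0:ℝ) ≤ min ‖y‖ ‖z‖ := le_min (norm_nonneg _) (norm_nonneg _)
  linarith

lemma seg_self (y : E) : seg y y = 0 := by simp [seg]

lemma seg_comm (y z : E) : seg y z = seg z y := by
  simp [seg, norm_sub_rev, min_comm]

lemma seg_le_norm (y z : E) : seg y z ≤ ‖y - z‖ := by
  rw [seg]
  apply div_le_self (norm_nonneg _)
  have : (0:ℝ) ≤ min ‖y‖ ‖z‖ := le_min (norm_nonneg _) (norm_nonneg _)
  linarith

/-- the key logarithmic lower bound for a segment. -/
lemma seg_ge_dlog (y z : E) :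
    |Real.log (1 + ‖y‖) - Real.log (1 + ‖z‖)| ≤ seg y z := by
  have key : ∀ a b : E, ‖b‖ ≤ ‖a‖ →
      Real.log (1 + ‖a‖) - Real.log (1 + ‖b‖) ≤ seg a b := by
    intro a b hba
    have hb : (0:ℝ) < 1 + ‖b‖ := by positivity
    have ha : (0:ℝ) < 1 + ‖a‖ := by positivity
    have h1 : Real.log (1 + ‖a‖) - Real.log (1 + ‖b‖)
        = Real.log ((1 + ‖a‖) / (1 + ‖b‖)) := (Real.log_div (by positivity) (by positivity)).symm
    rw [h1]
    have h2 : Real.log ((1 + ‖a‖) / (1 + ‖b‖)) ≤ (1 + ‖a‖) / (1 + ‖b‖) - 1 :=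
      Real.log_le_sub_one_of_pos (by positivity)
    have h3 : (1 + ‖a‖) / (1 + ‖b‖) - 1 = (‖a‖ - ‖b‖) / (1 + ‖b‖) := by
      field_simp
      ring
    have h4 : ‖a‖ - ‖b‖ ≤ ‖a - b‖ := by
      have := norm_sub_norm_le a b; linarith
    have hmin : min ‖a‖ ‖b‖ = ‖b‖ := min_eq_right hba
    have h5 : (‖a‖ - ‖b‖) / (1 + ‖b‖) ≤ ‖a - b‖ / (1 + ‖b‖) := by gcongr
    calc Real.log ((1 + ‖a‖) / (1 + ‖b‖)) ≤ (‖a‖ - ‖b‖) / (1 + ‖b‖) := by rw [← h3]; exact h2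
      _ ≤ ‖a - b‖ / (1 + ‖b‖) := h5
      _ = seg a b := by rw [seg, hmin]
  rcases le_total ‖z‖ ‖y‖ with h | h
  · rw [abs_of_nonneg (by
      have := Real.log_le_log (x := 1 + ‖z‖) (by positivity) (by linarith : 1 + ‖z‖ ≤ 1 + ‖y‖)
      linarith)]
    exact key y z h
  · rw [abs_of_nonpos (by
      have := Real.log_le_log (x := 1 + ‖y‖) (by positivity) (by linarith : 1 + ‖y‖ ≤ 1 + ‖z‖)
      linarith)]
    rw [seg_comm]
    have := key z y h
    linarith

/-- cost of a chain `p 0, p 1, ..., p n`. -/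
def chainCost (p : ℕ → E) (n : ℕ) : ℝ := ∑ i ∈ Finset.range n, seg (p i) (p (i+1))

lemma chainCost_nonneg (p : ℕ → E) (n : ℕ) : 0 ≤ chainCost p n :=
  Finset.sum_nonneg fun i _ => seg_nonneg _ _

lemma chainCost_mono (p : ℕ → E) {m n : ℕ} (h : m ≤ n) : chainCost p m ≤ chainCost p n := by
  apply Finset.sum_le_sum_of_subset_of_nonneg (Finset.range_subset_range.2 h)
  intro i _ _; exact seg_nonneg _ _

/-- log-variation along a chain. -/
lemma chain_dlog (p : ℕ → E) (n : ℕ) :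
    |Real.log (1 + ‖p 0‖) - Real.log (1 + ‖p n‖)| ≤ chainCost p n := by
  induction n with
  | zero => simp [chainCost]
  | succ n ih =>
      have h1 : |Real.log (1 + ‖p 0‖) - Real.log (1 + ‖p (n+1)‖)|
          ≤ |Real.log (1 + ‖p 0‖) - Real.log (1 + ‖p n‖)|
            + |Real.log (1 + ‖p n‖) - Real.log (1 + ‖p (n+1)‖)| := abs_sub_le _ _ _
      have h2 := seg_ge_dlog (p n) (p (n+1))
      have h3 : chainCost p (n+1) = chainCost p n + seg (p n) (p (n+1)) :=
        Finset.sum_range_succ _ _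
      linarith

/-- the chain (path) pseudometric. -/
def chainD (y z : E) : ℝ :=
  sInf {r : ℝ | ∃ (n : ℕ) (p : ℕ → E), p 0 = y ∧ p n = z ∧ r = chainCost p n}

lemma chainD_set_nonempty (y z : E) :
    {r : ℝ | ∃ (n : ℕ) (p : ℕ → E), p 0 = y ∧ p n = z ∧ r = chainCost p n}.Nonempty := by
  refine ⟨seg y z, 1, fun i => if i = 0 then y else z, by simp, by simp, ?_⟩
  simp [chainCost]

lemma chainD_set_bddBelow (y z : E) :
    BddBelow {r : ℝ | ∃ (n : ℕ) (p : ℕ → E), p 0 = y ∧ p n = z ∧ r = chainCost p n} := by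
  refine ⟨0, fun r hr => ?_⟩
  obtain ⟨n, p, -, -, rfl⟩ := hr
  exact chainCost_nonneg _ _

lemma chainD_nonneg (y z : E) : 0 ≤ chainD y z :=
  le_csInf (chainD_set_nonempty y z) (by rintro r ⟨n, p, -, -, rfl⟩; exact chainCost_nonneg _ _)

lemma chainD_le_seg (y z : E) : chainD y z ≤ seg y z :=
  csInf_le (chainD_set_bddBelow y z)
    ⟨1, fun i => if i = 0 then y else z, by simp, by simp, by simp [chainCost]⟩

lemma chainD_le_norm (y z : E) : chainD y z ≤ ‖y - z‖ :=
  (chainD_le_seg y z).trans (seg_le_norm y z)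

lemma chainD_self (y : E) : chainD y y = 0 :=
  le_antisymm ((chainD_le_seg y y).trans_eq (seg_self y)) (chainD_nonneg y y)

lemma chainD_triangle (x y z : E) : chainD x z ≤ chainD x y + chainD y z := by
  have key : ∀ r ∈ {r : ℝ | ∃ (n : ℕ) (p : ℕ → E), p 0 = x ∧ p n = y ∧ r = chainCost p n},
      ∀ s ∈ {r : ℝ | ∃ (n : ℕ) (p : ℕ → E), p 0 = y ∧ p n = z ∧ r = chainCost p n},
      chainD x z ≤ r + s := by
    rintro r ⟨n, p, hp0, hpn, rfl⟩ s ⟨m, q, hq0, hqm, rfl⟩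
    set pq : ℕ → E := fun i => if i < n then p i else q (i - n) with hpq
    have h0 : pq 0 = x := by
      by_cases h : 0 < n
      · simp only [hpq]; rw [if_pos h]; exact hp0
      · have hn0 : n = 0 := by omega
        subst hn0
        simp only [hpq]; rw [if_neg (by omega)]
        rw [Nat.sub_self, hq0, ← hpn, hp0]
    have hend : pq (n + m) = z := by
      have h : ¬ (n + m < n) := by omega
      have h2 : n + m - n = m := by omega
      simp only [hpq, h, if_false, h2, hqm]
    have hcost : chainCost pq (n + m) = chainCost p n + chainCost q m := by
      rw [chainCost, Finset.sum_range_add]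
      congr 1
      · apply Finset.sum_congr rfl
        intro i hi
        simp only [Finset.mem_range] at hi
        have h1 : pq i = p i := by simp [hpq, hi]
        have h2 : pq (i+1) = p (i+1) := by
          by_cases h : i + 1 < n
          · simp only [hpq]; rw [if_pos h]
          · have hieq : i + 1 = n := by omega
            simp only [hpq]; rw [if_neg h, hieq, Nat.sub_self, hq0, hpn]
        rw [h1, h2]
      · apply Finset.sum_congr rfl
        intro i _
        have h1 : pq (n + i) = q i := by
          by_cases h : n + i < n
          · omega
          · have : n + i - n = i := by omega
            simp [hpq, h, this]
        have h2 : pq (n + i + 1) = q (i+1) := by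
          have h : ¬ (n + i + 1 < n) := by omega
          have : n + i + 1 - n = i + 1 := by omega
          simp [hpq, h, this]
        rw [h1, h2]
    calc chainD x z ≤ chainCost pq (n+m) :=
          csInf_le (chainD_set_bddBelow x z) ⟨n+m, pq, h0, hend, rfl⟩
      _ = chainCost p n + chainCost q m := hcost
  have step1 : ∀ r ∈ {r : ℝ | ∃ (n : ℕ) (p : ℕ → E), p 0 = x ∧ p n = y ∧ r = chainCost p n},
      chainD x z - r ≤ chainD y z := by
    intro r hr
    conv_rhs => rw [chainD]
    apply le_csInf (chainD_set_nonempty y z)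
    intro s hs
    have := key r hr s hs
    linarith
  have step2 : chainD x z - chainD y z ≤ chainD x y := by
    conv_rhs => rw [chainD]
    apply le_csInf (chainD_set_nonempty x y)
    intro r hr
    have := step1 r hr
    linarith
  linarith

lemma chainD_comm (y z : E) : chainD y z = chainD z y := by
  have key : ∀ a b : E, chainD b a ≤ chainD a b := by
    intro a b
    apply le_csInf (chainD_set_nonempty a b)
    rintro r ⟨n, p, hp0, hpn, rfl⟩
    apply csInf_le (chainD_set_bddBelow b a)
    refine ⟨n, fun i => p (n - i), by simpa using hpn, by simpa using hp0, ?_⟩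
    rw [chainCost, chainCost]
    rw [← Finset.sum_range_reflect (fun i => seg (p (n - i)) (p (n - (i+1)))) n]
    apply Finset.sum_congr rfl
    intro j hj
    simp only [Finset.mem_range] at hj
    have e1 : n - (n - 1 - j) = j + 1 := by omega
    have e2 : n - (n - 1 - j + 1) = j := by omega
    simp only [e1, e2, seg_comm]
  exact le_antisymm (key z y) (key y z)

/-- lower bound: either the chain distance exceeds `log 2`, or it dominates
the norm distance up to a factor depending on the norm of the left endpoint. -/
lemma chainD_ge_min {y z : E} {M : ℝ} (hy : ‖y‖ ≤ M) :
    min (Real.log 2) (‖y - z‖ / (2 + 2*M)) ≤ chainD y z := by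
  have hM : 0 ≤ M := (norm_nonneg y).trans hy
  apply le_csInf (chainD_set_nonempty y z)
  rintro r ⟨n, p, hp0, hpn, rfl⟩
  by_cases hbig : Real.log 2 ≤ chainCost p n
  · exact (min_le_left _ _).trans hbig
  push_neg at hbig
  apply (min_le_right _ _).trans
  -- all points of the chain have norm ≤ 1 + 2M
  have hnorm : ∀ i, i ≤ n → ‖p i‖ ≤ 1 + 2*M := by
    intro i hi
    have h1 : |Real.log (1 + ‖p 0‖) - Real.log (1 + ‖p i‖)| ≤ chainCost p i := chain_dlog p i
    have h2 : chainCost p i ≤ chainCost p n := chainCost_mono p hi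
    have h3 : Real.log (1 + ‖p i‖) ≤ Real.log (1 + ‖p 0‖) + chainCost p n := by
      have := abs_le.1 h1
      linarith
    have h4 : Real.log (1 + ‖p 0‖) ≤ Real.log (1 + M) :=
      Real.log_le_log (x := 1 + ‖p 0‖) (by positivity) (by rw [hp0]; linarith)
    have h5 : Real.log (1 + ‖p i‖) < Real.log (1 + M) + Real.log 2 := by linarith
    have h6 : Real.log (1 + M) + Real.log 2 = Real.log (2*(1 + M)) := by
      rw [← Real.log_mul (by positivity) (by norm_num)]; ring_nf
    rw [h6] at h5
    have h7 : 1 + ‖p i‖ < 2*(1+M) := by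
      have := (Real.log_lt_log_iff (by positivity) (by positivity)).1 h5
      exact this
    linarith
  -- each segment dominates norm difference / (2+2M)
  have hseg : ∀ i, i < n → ‖p i - p (i+1)‖ / (2 + 2*M) ≤ seg (p i) (p (i+1)) := by
    intro i hi
    rw [seg]
    have h1 : min ‖p i‖ ‖p (i+1)‖ ≤ ‖p i‖ := min_le_left _ _
    have h2 := hnorm i (le_of_lt hi)
    have h3 := one_add_min_pos (p i) (p (i+1))
    exact div_le_div_of_nonneg_left (norm_nonneg _) h3 (by linarith)
  have htele : ‖p 0 - p n‖ ≤ ∑ i ∈ Finset.range n, ‖p i - p (i+1)‖ := by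
    have := dist_le_range_sum_dist p n
    simpa [dist_eq_norm] using this
  calc ‖y - z‖ / (2 + 2*M) = ‖p 0 - p n‖ / (2 + 2*M) := by rw [hp0, hpn]
    _ ≤ (∑ i ∈ Finset.range n, ‖p i - p (i+1)‖) / (2 + 2*M) := by
        gcongr
    _ ≤ ∑ i ∈ Finset.range n, seg (p i) (p (i+1)) := by
        rw [Finset.sum_div]
        exact Finset.sum_le_sum fun i hi => hseg i (Finset.mem_range.1 hi)
    _ = chainCost p n := rfl

end LinkingAux

namespace LinkingAux

/-- A bespoke Ekeland-type variational principle over a set `S` with an abstract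
pseudo-distance `d` (no symmetry needed). -/
theorem weak_ekeland {α : Type*} (S : Set α) (d : α → α → ℝ) (φ : α → ℝ) (m : ℝ)
    (hd_self : ∀ a ∈ S, d a a = 0)
    (hd_nonneg : ∀ a ∈ S, ∀ b ∈ S, 0 ≤ d a b)
    (hd_tri : ∀ a ∈ S, ∀ b ∈ S, ∀ c ∈ S, d a c ≤ d a b + d b c)
    (hφm : ∀ a ∈ S, m ≤ φ a)
    (hcomplete : ∀ u : ℕ → α, (∀ n, u n ∈ S) →
      (∀ ε : ℝ, 0 < ε → ∃ N, ∀ m' n', N ≤ m' → m' ≤ n' → d (u m') (u n') ≤ ε) →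
      ∃ a ∈ S, Tendsto (fun n => d (u n) a) atTop (𝓝 0))
    (hlsc : ∀ (u : ℕ → α) (a : α), a ∈ S → (∀ n, u n ∈ S) →
      Tendsto (fun n => d (u n) a) atTop (𝓝 0) →
      ∀ b : ℝ, (∀ n, φ (u n) ≤ b) → φ a ≤ b)
    (κ : ℝ) (hκ : 0 < κ) (a₀ : α) (ha₀ : a₀ ∈ S) :
    ∃ a ∈ S, φ a ≤ φ a₀ ∧ ∀ b ∈ S, φ a - κ * d a b ≤ φ b := by
  classical
  set F : α → Set α := fun a => {c | c ∈ S ∧ φ c ≤ φ a - κ * d a c} with hF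
  have hmemF : ∀ a ∈ S, a ∈ F a := by
    intro a ha
    refine ⟨ha, ?_⟩
    rw [hd_self a ha]
    simp
  have hFne : ∀ a ∈ S, (φ '' F a).Nonempty := fun a ha => ⟨φ a, a, hmemF a ha, rfl⟩
  have hFbdd : ∀ a, BddBelow (φ '' F a) := by
    rintro a
    refine ⟨m, ?_⟩
    rintro y ⟨c, hc, rfl⟩
    exact hφm c hc.1
  have step : ∀ (n : ℕ) (a : α), a ∈ S → ∃ b, (b ∈ S ∧ φ b ≤ φ a - κ * d a b) ∧
      φ b ≤ sInf (φ '' F a) + 1/(n+1) := by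
    intro n a ha
    obtain ⟨y, ⟨b, hb, rfl⟩, hy⟩ :=
      Real.lt_sInf_add_pos (hFne a ha) (by positivity : (0:ℝ) < 1/(n+1))
    exact ⟨b, hb, le_of_lt hy⟩
  let seq : ℕ → {a : α // a ∈ S} := fun n => Nat.rec ⟨a₀, ha₀⟩
    (fun n p => ⟨(step n p.1 p.2).choose, (step n p.1 p.2).choose_spec.1.1⟩) n
  set u : ℕ → α := fun n => (seq n).1 with hu
  have hu0 : u 0 = a₀ := rfl
  have huS : ∀ n, u n ∈ S := fun n => (seq n).2
  have hrec1 : ∀ n, φ (u (n+1)) ≤ φ (u n) - κ * d (u n) (u (n+1)) := fun n =>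
    (step n (seq n).1 (seq n).2).choose_spec.1.2
  have hrec2 : ∀ n, φ (u (n+1)) ≤ sInf (φ '' F (u n)) + 1/(n+1) := fun n =>
    (step n (seq n).1 (seq n).2).choose_spec.2
  have hmono : ∀ n, φ (u (n+1)) ≤ φ (u n) := by
    intro n
    have h1 := hrec1 n
    have h2 := hd_nonneg _ (huS n) _ (huS (n+1))
    nlinarith
  have hanti : Antitone (fun n => φ (u n)) := antitone_nat_of_succ_le hmono
  have hchain : ∀ n k, d (u n) (u (n+k)) ≤ (φ (u n) - φ (u (n+k)))/κ := by
    intro n k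
    induction k with
    | zero => rw [Nat.add_zero, hd_self _ (huS n)]; simp
    | succ k ih =>
        have h1 : d (u n) (u (n+(k+1))) ≤ d (u n) (u (n+k)) + d (u (n+k)) (u (n+k+1)) := by
          have := hd_tri _ (huS n) _ (huS (n+k)) _ (huS (n+k+1))
          simpa [← add_assoc] using this
        have h2 := hrec1 (n+k)
        have h3 : d (u (n+k)) (u (n+k+1)) ≤ (φ (u (n+k)) - φ (u (n+k+1)))/κ := by
          rw [le_div_iff₀ hκ]; nlinarith
        calc d (u n) (u (n+(k+1))) ≤ d (u n) (u (n+k)) + d (u (n+k)) (u (n+k+1)) := h1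
          _ ≤ (φ (u n) - φ (u (n+k)))/κ + (φ (u (n+k)) - φ (u (n+k+1)))/κ :=
              add_le_add ih h3
          _ = (φ (u n) - φ (u (n+(k+1))))/κ := by rw [← add_assoc]; ring
  set L : ℝ := ⨅ n, φ (u n) with hL
  have hbddL : BddBelow (Set.range fun n => φ (u n)) := by
    refine ⟨m, ?_⟩
    rintro y ⟨n, rfl⟩
    exact hφm _ (huS n)
  have hLtend : Tendsto (fun n => φ (u n)) atTop (𝓝 L) := tendsto_atTop_ciInf hanti hbddL
  have hLle : ∀ n, L ≤ φ (u n) := fun n => ciInf_le hbddL n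
  have hcauchy : ∀ ε : ℝ, 0 < ε → ∃ N, ∀ m' n', N ≤ m' → m' ≤ n' → d (u m') (u n') ≤ ε := by
    intro ε hε
    have hev : ∀ᶠ n in atTop, φ (u n) < L + κ*ε :=
      hLtend.eventually_lt_const (by nlinarith)
    obtain ⟨N, hN⟩ := hev.exists_forall_of_atTop
    refine ⟨N, fun m' n' hm' hmn => ?_⟩
    obtain ⟨k, rfl⟩ := Nat.exists_eq_add_of_le hmn
    calc d (u m') (u (m'+k)) ≤ (φ (u m') - φ (u (m'+k)))/κ := hchain m' k
      _ ≤ ε := by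
          rw [div_le_iff₀ hκ]
          have h1 := hN m' hm'
          have h2 := hLle (m'+k)
          nlinarith
  obtain ⟨a, haS, hda⟩ := hcomplete u huS hcauchy
  have han : ∀ n, φ a ≤ φ (u n) := by
    intro n
    apply hlsc (fun k => u (k + n)) a haS (fun k => huS _)
      (hda.comp (tendsto_add_atTop_nat n)) (φ (u n))
    intro k
    exact hanti (Nat.le_add_left n k)
  have haL : φ a ≤ L := le_ciInf han
  have hdan : ∀ n, d (u n) a ≤ (φ (u n) - L)/κ := by
    intro n
    have hbound : ∀ k, d (u n) a ≤ (φ (u n) - φ (u (k + n)))/κ + d (u (k+n)) a := by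
      intro k
      have h1 := hd_tri _ (huS n) _ (huS (k+n)) _ haS
      have h2 : d (u n) (u (k+n)) ≤ (φ (u n) - φ (u (k+n)))/κ := by
        rw [Nat.add_comm k n]; exact hchain n k
      linarith
    have htend : Tendsto (fun k => (φ (u n) - φ (u (k + n)))/κ + d (u (k+n)) a) atTop
        (𝓝 ((φ (u n) - L)/κ + 0)) := by
      apply Tendsto.add
      · exact (tendsto_const_nhds.sub (hLtend.comp (tendsto_add_atTop_nat n))).div_const κ
      · exact hda.comp (tendsto_add_atTop_nat n)
    have := ge_of_tendsto' htend hbound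
    linarith
  have haF : ∀ n, φ a ≤ φ (u n) - κ * d (u n) a := by
    intro n
    have h1 := hdan n
    rw [le_div_iff₀ hκ] at h1
    nlinarith
  refine ⟨a, haS, hu0 ▸ han 0, ?_⟩
  intro b hb
  by_contra hcon
  push_neg at hcon
  have hbF : ∀ n, b ∈ F (u n) := by
    intro n
    refine ⟨hb, ?_⟩
    have h1 := hd_tri _ (huS n) _ haS _ hb
    have h2 := haF n
    nlinarith
  have hblow : ∀ n, sInf (φ '' F (u n)) ≤ φ b := fun n => csInf_le (hFbdd _) ⟨b, hbF n, rfl⟩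
  have hLn : ∀ n : ℕ, L - 1/(n+1) ≤ φ b := by
    intro n
    have h1 := hrec2 n
    have h2 := hblow n
    have h3 := hLle (n+1)
    linarith
  have hLb : L ≤ φ b := by
    by_contra hlt
    push_neg at hlt
    obtain ⟨n, hn⟩ := exists_nat_gt (1/(L - φ b))
    have hpos : 0 < L - φ b := by linarith
    have h1 : 1/((n:ℝ)+1) < L - φ b := by
      rw [div_lt_iff₀ (by positivity)]
      rw [div_lt_iff₀ hpos] at hn
      nlinarith
    have := hLn n
    linarith
  have hd := hd_nonneg a haS b hb
  nlinarith

/-- uniform continuity on a thickened neighborhood of a compact set. -/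
theorem compact_thickened_uc {X Y : Type*} [PseudoMetricSpace X] [PseudoMetricSpace Y]
    (g : X → Y) (hg : Continuous g) {K : Set X} (hK : IsCompact K) {η : ℝ} (hη : 0 < η) :
    ∃ δ > 0, ∀ y ∈ K, ∀ z : X, dist z y ≤ δ → dist (g z) (g y) ≤ η := by
  have key : ∀ y : X, ∃ r > 0, ∀ z, dist z y < 2*r → dist (g z) (g y) ≤ η/2 := by
    intro y
    obtain ⟨δ, hδ, h⟩ := Metric.continuous_iff.1 hg y (η/2) (by positivity)
    exact ⟨δ/2, by positivity, fun z hz => le_of_lt (h z (by linarith))⟩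
  choose r hr h2 using key
  obtain ⟨Y0, hY0K, hY0fin, hcov⟩ := hK.elim_finite_subcover_image
    (fun y _ => isOpen_ball (x := y) (ε := r y))
    (fun y hy => mem_iUnion₂.2 ⟨y, hy, mem_ball_self (hr y)⟩)
  rcases Y0.eq_empty_or_nonempty with hY0e | hY0ne
  · refine ⟨1, one_pos, fun y hy z _ => ?_⟩
    exfalso
    have := hcov hy
    simp [hY0e] at this
  · have hFne : hY0fin.toFinset.Nonempty := by
      rwa [Set.Finite.toFinset_nonempty]
    set δ : ℝ := hY0fin.toFinset.inf' hFne r with hδdef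
    have hδpos : 0 < δ := by
      rw [hδdef, Finset.lt_inf'_iff]
      intro i _
      exact hr i
    refine ⟨δ, hδpos, fun y hy z hz => ?_⟩
    obtain ⟨y', hy'Y0, hyy'⟩ := mem_iUnion₂.1 (hcov hy)
    have hyy' : dist y y' < r y' := mem_ball.1 hyy'
    have hδy' : δ ≤ r y' := Finset.inf'_le r (hY0fin.mem_toFinset.2 hy'Y0)
    have hzy' : dist z y' < 2 * r y' := by
      calc dist z y' ≤ dist z y + dist y y' := dist_triangle _ _ _
        _ < δ + r y' := by linarith
        _ ≤ 2 * r y' := by linarith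
    have h3 : dist (g z) (g y') ≤ η/2 := h2 y' z hzy'
    have h4 : dist (g y) (g y') ≤ η/2 := h2 y' y (by have := dist_nonneg (x := y) (y := y'); linarith)
    calc dist (g z) (g y) ≤ dist (g z) (g y') + dist (g y') (g y) := dist_triangle _ _ _
      _ = dist (g z) (g y') + dist (g y) (g y') := by rw [dist_comm (g y') (g y)]
      _ ≤ η := by linarith

end LinkingAux

namespace LinkingAux

variable {E : Type*} [NormedAddCommGroup E]

lemma chainD_ge_dlog (y z : E) :
    |Real.log (1 + ‖y‖) - Real.log (1 + ‖z‖)| ≤ chainD y z := by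
  apply le_csInf (chainD_set_nonempty y z)
  rintro r ⟨n, p, hp0, hpn, rfl⟩
  have := chain_dlog p n
  rwa [hp0, hpn] at this

end LinkingAux


set_option maxHeartbeats 2000000 in
open LinkingAux in
/-- **Abstract Linking Theorem.**  Let `E = V ⊕ X` be a real Banach space with `V`
finite-dimensional, `R > ρ > 0`, `α > ω`, `e ∈ X` with `‖e‖ = 1`, and `I ∈ C¹(E,ℝ)`.
Let `Q := (B̄_R ∩ V) ⊕ {re : 0 ≤ r ≤ R}` and let `bQ` be its boundary in `ℝe ⊕ V`.
Assume `(I₁)`: `I ≥ α` on `∂B_ρ ∩ X`, and `(I₂)`: there is `h₀ ∈ C(Q,E)` with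
(i) `sup_Q I∘h₀ < ∞`, (ii) `sup_{bQ} I∘h₀ = ω`, (iii) `h₀(bQ) ∩ (∂B_ρ ∩ X) = ∅`,
(iv) there is a unique `w ∈ h₀(Q) ∩ (∂B_ρ ∩ X)` and `deg(h₀, int Q, w) ≠ 0`
(rendered as the degree-theoretic consequence: every continuous map on `Q` agreeing with
`h₀` on `bQ` attains the value `w`).  Then `I` has a Cerami sequence at the level
`c := inf_{h∈Γ} max_{u∈Q} I(h(u)) ≥ α`, where `Γ := {h ∈ C(Q,E) : h|_{bQ} = h₀}`. -/
theorem abstract_linking_theorem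
    {E : Type*} [NormedAddCommGroup E] [NormedSpace ℝ E] [CompleteSpace E]
    (V X : Submodule ℝ E) (hVfd : FiniteDimensional ℝ V) (hcompl : IsCompl V X)
    (I : E → ℝ) (hI : ContDiff ℝ 1 I)
    (R ρ α ω : ℝ) (hρpos : 0 < ρ) (hρR : ρ < R) (hωα : ω < α)
    (e : E) (heX : e ∈ X) (hnorme : ‖e‖ = 1)
    (Q bQ : Set E)
    (hQ : Q = {u | ∃ v ∈ (V : Set E), ∃ r : ℝ,
        ‖v‖ ≤ R ∧ 0 ≤ r ∧ r ≤ R ∧ u = v + r • e})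
    (hbQ : bQ = {u | ∃ v ∈ (V : Set E), ∃ r : ℝ,
        ‖v‖ ≤ R ∧ 0 ≤ r ∧ r ≤ R ∧ (‖v‖ = R ∨ r = 0 ∨ r = R) ∧ u = v + r • e})
    (h₀ : E → E) (hh₀ : ContinuousOn h₀ Q)
    -- (I₁)
    (hI1 : ∀ u ∈ X, ‖u‖ = ρ → α ≤ I u)
    -- (I₂)(i)
    (hI2i : BddAbove ((fun u => I (h₀ u)) '' Q))
    -- (I₂)(ii)
    (hI2ii : IsLUB ((fun u => I (h₀ u)) '' bQ) ω)
    -- (I₂)(iii)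
    (hI2iii : ∀ u ∈ bQ, ¬ (h₀ u ∈ X ∧ ‖h₀ u‖ = ρ))
    -- (I₂)(iv): unique intersection point and nonvanishing Brouwer degree
    (w : E)
    (hI2iv : h₀ '' Q ∩ {u | u ∈ X ∧ ‖u‖ = ρ} = {w})
    (hdeg : ∀ g : E → E, ContinuousOn g Q → (∀ x ∈ bQ, g x = h₀ x) → w ∈ g '' Q) :
    ∃ c : ℝ, α ≤ c ∧
      c = sInf ((fun h => sSup ((fun u => I (h u)) '' Q)) ''
          {h : E → E | ContinuousOn h Q ∧ ∀ x ∈ bQ, h x = h₀ x}) ∧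
      ∃ u : ℕ → E,
        Tendsto (fun n => I (u n)) atTop (𝓝 c) ∧
        Tendsto (fun n => (1 + ‖u n‖) * ‖fderiv ℝ I (u n)‖) atTop (𝓝 (0 : ℝ)) := by
  classical
  haveI := hVfd
  have hRpos : 0 < R := lt_trans hρpos hρR
  -- basic geometry of `Q`
  have hbQQ : bQ ⊆ Q := by
    rw [hQ, hbQ]
    rintro u ⟨v, hv, r, h1, h2, h3, _, h5⟩
    exact ⟨v, hv, r, h1, h2, h3, h5⟩
  have hQne : Q.Nonempty := by
    refine ⟨0, ?_⟩
    rw [hQ]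
    exact ⟨0, zero_mem V, 0, by simpa using hRpos.le⟩
  have hQcomp : IsCompact Q := by
    have hQim : Q = (fun p : V × ℝ => (p.1 : E) + p.2 • e) ''
        (Metric.closedBall (0 : V) R ×ˢ Icc (0:ℝ) R) := by
      rw [hQ]
      ext u
      constructor
      · rintro ⟨v, hv, r, h1, h2, h3, rfl⟩
        refine ⟨(⟨v, hv⟩, r), ⟨?_, h2, h3⟩, rfl⟩
        simpa [Metric.mem_closedBall, dist_zero_right] using h1
      · rintro ⟨⟨⟨v, hv⟩, r⟩, ⟨hb, hr1, hr2⟩, rfl⟩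
        refine ⟨v, hv, r, ?_, hr1, hr2, rfl⟩
        simpa [Metric.mem_closedBall, dist_zero_right] using hb
    rw [hQim]
    exact (((isCompact_closedBall (0:V) R).prod isCompact_Icc).image
      ((continuous_subtype_val.comp continuous_fst).add (continuous_snd.smul continuous_const)))
  -- the min-max structure
  set Γ : Set (E → E) := {h : E → E | ContinuousOn h Q ∧ ∀ x ∈ bQ, h x = h₀ x} with hΓdef
  set φ : (E → E) → ℝ := fun h => sSup ((fun u => I (h u)) '' Q) with hφdef
  set c : ℝ := sInf (φ '' Γ) with hcdef
  have himage : ∀ h ∈ Γ, IsCompact ((fun u => I (h u)) '' Q) := fun h hh =>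
    hQcomp.image_of_continuousOn (hI.continuous.comp_continuousOn hh.1)
  have himne : ∀ h : E → E, ((fun u => I (h u)) '' Q).Nonempty := fun h => hQne.image _
  have hφmem : ∀ h ∈ Γ, φ h ∈ (fun u => I (h u)) '' Q := fun h hh =>
    (himage h hh).sSup_mem (himne h)
  have hφub : ∀ h ∈ Γ, ∀ x ∈ Q, I (h x) ≤ φ h := fun h hh x hx =>
    le_csSup (himage h hh).bddAbove ⟨x, hx, rfl⟩
  have hwX : w ∈ X ∧ ‖w‖ = ρ := by
    have hw : w ∈ h₀ '' Q ∩ {u | u ∈ X ∧ ‖u‖ = ρ} := by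
      rw [hI2iv]; exact rfl
    exact hw.2
  have hIw : α ≤ I w := hI1 w hwX.1 hwX.2
  have hh₀Γ : h₀ ∈ Γ := ⟨hh₀, fun x _ => rfl⟩
  have hαφ : ∀ h ∈ Γ, α ≤ φ h := by
    intro h hh
    obtain ⟨x, hxQ, hxw⟩ := hdeg h hh.1 hh.2
    calc α ≤ I w := hIw
      _ = I (h x) := by rw [hxw]
      _ ≤ φ h := hφub h hh x hxQ
  have hΓim_ne : (φ '' Γ).Nonempty := ⟨φ h₀, h₀, hh₀Γ, rfl⟩
  have hbdd : BddBelow (φ '' Γ) := ⟨α, by rintro y ⟨h, hh, rfl⟩; exact hαφ h hh⟩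
  have hαc : α ≤ c := le_csInf hΓim_ne (by rintro y ⟨h, hh, rfl⟩; exact hαφ h hh)
  have hcφ : ∀ h ∈ Γ, c ≤ φ h := fun h hh => csInf_le hbdd ⟨h, hh, rfl⟩
  have hωb : ∀ x ∈ bQ, I (h₀ x) ≤ ω := fun x hx => hI2ii.1 ⟨x, hx, rfl⟩
  -- the weighted sup-metric on Γ
  set dd : (E → E) → (E → E) → ℝ :=
    fun f g => sSup ((fun x => chainD (f x) (g x)) '' Q) with hdddef
  have hnormbd : ∀ h ∈ Γ, ∃ Cn : ℝ, 0 ≤ Cn ∧ ∀ x ∈ Q, ‖h x‖ ≤ Cn := by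
    intro h hh
    obtain ⟨Cn, hCn⟩ := (hQcomp.image_of_continuousOn hh.1).isBounded.exists_norm_le
    exact ⟨max Cn 0, le_max_right _ _, fun x hx =>
      le_trans (hCn _ ⟨x, hx, rfl⟩) (le_max_left _ _)⟩
  have hddbdd : ∀ f ∈ Γ, ∀ g ∈ Γ, BddAbove ((fun x => chainD (f x) (g x)) '' Q) := by
    intro f hf g hg
    obtain ⟨Cf, _, hCf⟩ := hnormbd f hf
    obtain ⟨Cg, _, hCg⟩ := hnormbd g hg
    refine ⟨Cf + Cg, ?_⟩
    rintro y ⟨x, hx, rfl⟩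
    calc chainD (f x) (g x) ≤ ‖f x - g x‖ := chainD_le_norm _ _
      _ ≤ ‖f x‖ + ‖g x‖ := norm_sub_le _ _
      _ ≤ Cf + Cg := add_le_add (hCf x hx) (hCg x hx)
  have hddle : ∀ f ∈ Γ, ∀ g ∈ Γ, ∀ x ∈ Q, chainD (f x) (g x) ≤ dd f g := fun f hf g hg x hx =>
    le_csSup (hddbdd f hf g hg) ⟨x, hx, rfl⟩
  have hddself : ∀ f ∈ Γ, dd f f = 0 := by
    intro f hf
    apply le_antisymm
    · apply csSup_le ((hQne).image _)
      rintro y ⟨x, hx, rfl⟩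
      exact (chainD_self (f x)).le
    · obtain ⟨x₀, hx₀⟩ := hQne
      calc (0:ℝ) = chainD (f x₀) (f x₀) := (chainD_self _).symm
        _ ≤ dd f f := hddle f hf f hf x₀ hx₀
  have hddnn : ∀ f ∈ Γ, ∀ g ∈ Γ, 0 ≤ dd f g := by
    intro f hf g hg
    obtain ⟨x₀, hx₀⟩ := hQne
    exact (chainD_nonneg (f x₀) (g x₀)).trans (hddle f hf g hg x₀ hx₀)
  have hddtri : ∀ f ∈ Γ, ∀ g ∈ Γ, ∀ h ∈ Γ, dd f h ≤ dd f g + dd g h := by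
    intro f hf g hg h hh
    apply csSup_le ((hQne).image _)
    rintro y ⟨x, hx, rfl⟩
    calc chainD (f x) (h x) ≤ chainD (f x) (g x) + chainD (g x) (h x) := chainD_triangle _ _ _
      _ ≤ dd f g + dd g h := add_le_add (hddle f hf g hg x hx) (hddle g hg h hh x hx)
  -- completeness of (Γ, dd)
  have hlog2 : (0:ℝ) < Real.log 2 := Real.log_pos (by norm_num)
  have hcomplete : ∀ u : ℕ → (E → E), (∀ n, u n ∈ Γ) →
      (∀ ε : ℝ, 0 < ε → ∃ N, ∀ m' n', N ≤ m' → m' ≤ n' → dd (u m') (u n') ≤ ε) →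
      ∃ a ∈ Γ, Tendsto (fun n => dd (u n) a) atTop (𝓝 0) := by
    intro u huΓ hcau
    obtain ⟨N₁, hN₁⟩ := hcau (Real.log 2 / 2) (by positivity)
    obtain ⟨C₀, hC₀0, hC₀⟩ := hnormbd (u N₁) (huΓ N₁)
    set M : ℝ := 2*C₀ + 1 with hMdef
    have hMbd : ∀ n, N₁ ≤ n → ∀ x ∈ Q, ‖u n x‖ ≤ M := by
      intro n hn x hx
      have h1 : chainD (u N₁ x) (u n x) ≤ Real.log 2/2 :=
        (hddle _ (huΓ N₁) _ (huΓ n) x hx).trans (hN₁ N₁ n le_rfl hn)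
      have h2 := chainD_ge_dlog (u N₁ x) (u n x)
      have h3 : Real.log (1 + ‖u n x‖) ≤ Real.log (1 + ‖u N₁ x‖) + Real.log 2/2 := by
        have := abs_le.1 h2
        linarith
      have h4 : Real.log (1 + ‖u N₁ x‖) ≤ Real.log (1 + C₀) :=
        Real.log_le_log (x := 1 + ‖u N₁ x‖) (by positivity) (by linarith [hC₀ x hx])
      have h5 : Real.log (1 + C₀) + Real.log 2 = Real.log (2*(1 + C₀)) := by
        rw [← Real.log_mul (by positivity) (by norm_num)]; ring_nf
      have h6 : Real.log (1 + ‖u n x‖) ≤ Real.log (2*(1+C₀)) := by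
        rw [← h5]; linarith
      have h7 : 1 + ‖u n x‖ ≤ 2*(1+C₀) :=
        (Real.log_le_log_iff (by positivity) (by positivity)).1 h6
      rw [hMdef]; linarith
    have hM0 : 0 ≤ M := by rw [hMdef]; linarith
    have hucauchy : ∀ η : ℝ, 0 < η → ∃ N, ∀ m' n', N ≤ m' → m' ≤ n' →
        ∀ x ∈ Q, ‖u m' x - u n' x‖ ≤ η := by
      intro η hη
      obtain ⟨N₂, hN₂⟩ := hcau (min (Real.log 2/2) (η/(2+2*M)))
        (lt_min (by positivity) (by positivity))
      refine ⟨max N₁ N₂, fun m' n' hm' hmn x hx => ?_⟩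
      have hD : chainD (u m' x) (u n' x) ≤ min (Real.log 2/2) (η/(2+2*M)) :=
        (hddle _ (huΓ m') _ (huΓ n') x hx).trans
          (hN₂ m' n' (le_trans (le_max_right _ _) hm') hmn)
      have hm'M : ‖u m' x‖ ≤ M := hMbd m' (le_trans (le_max_left _ _) hm') x hx
      have hmin := chainD_ge_min (z := u n' x) hm'M
      have hlt : chainD (u m' x) (u n' x) < Real.log 2 :=
        lt_of_le_of_lt (hD.trans (min_le_left _ _)) (by linarith)
      rcases le_or_gt (Real.log 2) (‖u m' x - u n' x‖/(2+2*M)) with hc | hc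
      · exfalso
        rw [min_eq_left hc] at hmin
        linarith
      · rw [min_eq_right hc.le] at hmin
        have h8 : ‖u m' x - u n' x‖/(2+2*M) ≤ η/(2+2*M) :=
          hmin.trans (hD.trans (min_le_right _ _))
        have h9 : (0:ℝ) < 2+2*M := by linarith
        calc ‖u m' x - u n' x‖ = (‖u m' x - u n' x‖/(2+2*M))*(2+2*M) := by field_simp
          _ ≤ (η/(2+2*M))*(2+2*M) := by nlinarith
          _ = η := by field_simp
    have hlim : ∀ x, x ∈ Q → ∃ Lx : E, Tendsto (fun n => u n x) atTop (𝓝 Lx) := by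
      intro x hx
      apply cauchySeq_tendsto_of_complete
      rw [Metric.cauchySeq_iff]
      intro η hη
      obtain ⟨N, hN⟩ := hucauchy (η/2) (by positivity)
      refine ⟨N, fun m₁ hm₁ n₁ hn₁ => ?_⟩
      rcases le_total m₁ n₁ with h | h
      · have := hN m₁ n₁ hm₁ h x hx
        rw [dist_eq_norm]
        calc ‖u m₁ x - u n₁ x‖ ≤ η/2 := this
          _ < η := by linarith
      · have := hN n₁ m₁ hn₁ h x hx
        rw [dist_comm, dist_eq_norm]
        calc ‖u n₁ x - u m₁ x‖ ≤ η/2 := this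
          _ < η := by linarith
    choose! f hfQlim using hlim
    have hunif : TendstoUniformlyOn (fun n x => u n x) f atTop Q := by
      rw [Metric.tendstoUniformlyOn_iff]
      intro η hη
      obtain ⟨N, hN⟩ := hucauchy (η/2) (by positivity)
      filter_upwards [eventually_ge_atTop N] with n hn x hx
      have hdlim : Tendsto (fun m => dist (u m x) (u n x)) atTop
          (𝓝 (dist (f x) (u n x))) := (hfQlim x hx).dist tendsto_const_nhds
      have hdle : dist (f x) (u n x) ≤ η/2 := by
        apply le_of_tendsto hdlim
        filter_upwards [eventually_ge_atTop n] with m hm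
        rw [dist_eq_norm, ← norm_sub_rev]
        exact hN n m hn hm x hx
      linarith
    have hfΓ : f ∈ Γ := by
      constructor
      · exact hunif.continuousOn (Filter.Eventually.of_forall fun n => (huΓ n).1).frequently
      · intro x hx
        have h1 : Tendsto (fun n => u n x) atTop (𝓝 (h₀ x)) := by
          have heq : (fun n => u n x) = fun _ => h₀ x := funext fun n => (huΓ n).2 x hx
          rw [heq]; exact tendsto_const_nhds
        exact tendsto_nhds_unique (hfQlim x (hbQQ hx)) h1
    refine ⟨f, hfΓ, ?_⟩
    rw [Metric.tendsto_atTop]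
    intro η hη
    obtain ⟨N, hN⟩ := (Metric.tendstoUniformlyOn_iff.1 hunif (η/2)
      (by positivity)).exists_forall_of_atTop
    refine ⟨N, fun n hn => ?_⟩
    have hle : dd (u n) f ≤ η/2 := by
      apply csSup_le ((hQne).image _)
      rintro y ⟨x, hx, rfl⟩
      calc chainD (u n x) (f x) ≤ ‖u n x - f x‖ := chainD_le_norm _ _
        _ = dist (f x) (u n x) := by rw [dist_eq_norm, norm_sub_rev]
        _ ≤ η/2 := (hN n hn x hx).le
    have hge : 0 ≤ dd (u n) f := hddnn _ (huΓ n) _ hfΓ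
    rw [Real.dist_eq]
    rw [abs_of_nonneg (by linarith)]
    linarith
  -- lower semicontinuity of φ along dd-convergent sequences
  have hlscΓ : ∀ (u : ℕ → (E → E)) (a : E → E), a ∈ Γ → (∀ n, u n ∈ Γ) →
      Tendsto (fun n => dd (u n) a) atTop (𝓝 0) →
      ∀ b : ℝ, (∀ n, φ (u n) ≤ b) → φ a ≤ b := by
    intro u a haΓ huΓ htend b hb
    obtain ⟨xs, hxsQ, hxs⟩ := hφmem a haΓ
    have hDx : Tendsto (fun n => chainD (u n xs) (a xs)) atTop (𝓝 0) :=
      squeeze_zero (fun n => chainD_nonneg _ _)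
        (fun n => hddle _ (huΓ n) _ haΓ xs hxsQ) htend
    have hnorm : Tendsto (fun n => u n xs) atTop (𝓝 (a xs)) := by
      rw [tendsto_iff_norm_sub_tendsto_zero]
      apply squeeze_zero' (Filter.Eventually.of_forall fun n => norm_nonneg _)
        ?_ (by simpa using hDx.const_mul (2+2*‖a xs‖))
      filter_upwards [hDx.eventually_lt_const hlog2] with n hn
      have hmin := chainD_ge_min (y := a xs) (z := u n xs) le_rfl
      rw [chainD_comm (a xs) (u n xs)] at hmin
      rcases le_or_gt (Real.log 2) (‖a xs - u n xs‖/(2+2*‖a xs‖)) with hc | hc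
      · exfalso
        rw [min_eq_left hc] at hmin
        linarith
      · rw [min_eq_right hc.le] at hmin
        have h9 : (0:ℝ) < 2+2*‖a xs‖ := by positivity
        rw [norm_sub_rev]
        calc ‖a xs - u n xs‖ = (‖a xs - u n xs‖/(2+2*‖a xs‖))*(2+2*‖a xs‖) := by field_simp
          _ ≤ chainD (u n xs) (a xs) * (2+2*‖a xs‖) := by nlinarith
          _ = (2+2*‖a xs‖) * chainD (u n xs) (a xs) := mul_comm _ _
    have hIlim : Tendsto (fun n => I (u n xs)) atTop (𝓝 (I (a xs))) :=
      (hI.continuous.tendsto _).comp hnorm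
    have hfin : I (a xs) ≤ b :=
      le_of_tendsto hIlim (Filter.Eventually.of_forall fun n =>
        (hφub (u n) (huΓ n) xs hxsQ).trans (hb n))
    rw [← hxs]
    exact hfin
  -- the main claim
  have hI'cont : Continuous (fderiv ℝ I) := hI.continuous_fderiv one_ne_zero
  have main : ∀ ε : ℝ, 0 < ε → ε ≤ (α - ω)/2 →
      ∃ uu : E, |I uu - c| ≤ ε ∧ (1+‖uu‖)*‖fderiv ℝ I uu‖ ≤ ε := by
    intro ε hε hεα
    by_contra hconn
    push_neg at hconn
    -- choose an almost optimal base point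
    obtain ⟨y₀, hy₀mem, hy₀⟩ := Real.lt_sInf_add_pos hΓim_ne (show (0:ℝ) < ε/2 by positivity)
    obtain ⟨f₀, hf₀Γ, rfl⟩ := hy₀mem
    -- Ekeland's principle
    obtain ⟨f, hfΓ, hfφ, hEk⟩ := weak_ekeland Γ dd φ α hddself hddnn hddtri hαφ
      hcomplete hlscΓ (ε/16) (by positivity) f₀ hf₀Γ
    have hFub : φ f ≤ c + ε/2 := hfφ.trans hy₀.le
    have hFlb : c ≤ φ f := hcφ f hfΓ
    -- constants
    obtain ⟨Nf, hNf0, hNf⟩ := hnormbd f hfΓ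
    have hKf : IsCompact (f '' Q) := hQcomp.image_of_continuousOn hfΓ.1
    obtain ⟨B₀, hB₀'⟩ := (hKf.image hI'cont.norm).isBounded.exists_norm_le
    have hB₀ : ∀ x ∈ Q, ‖fderiv ℝ I (f x)‖ ≤ B₀ := fun x hx =>
      le_trans (le_abs_self _) (by
        have := hB₀' ‖fderiv ℝ I (f x)‖ ⟨f x, ⟨x, hx, rfl⟩, rfl⟩
        rwa [Real.norm_eq_abs] at this)
    obtain ⟨δ₁, hδ₁pos, hδ₁⟩ := compact_thickened_uc (fderiv ℝ I) hI'cont hKf one_pos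
    -- the near-maximal set
    set Nσ : Set E := Q ∩ {x | φ f - ε/2 ≤ I (f x)} with hNσdef
    have hNσQ : Nσ ⊆ Q := inter_subset_left
    have hNσcomp : IsCompact Nσ := by
      apply IsCompact.of_isClosed_subset hQcomp ?_ hNσQ
      exact (hI.continuous.comp_continuousOn hfΓ.1).preimage_isClosed_of_isClosed
        hQcomp.isClosed isClosed_Ici
    have hNσne : Nσ.Nonempty := by
      obtain ⟨xm, hxmQ, hxm⟩ := hφmem f hfΓ
      have hxm' : I (f xm) = φ f := hxm
      exact ⟨xm, hxmQ, by simp only [mem_setOf_eq]; linarith⟩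
    have hband : ∀ x ∈ Nσ, |I (f x) - c| ≤ ε := by
      rintro x ⟨hxQ, hxv⟩
      have h1 : I (f x) ≤ φ f := hφub f hfΓ x hxQ
      rw [abs_le]
      constructor <;> simp only [mem_setOf_eq] at hxv <;> [linarith; linarith]
    -- pointwise selection of descent directions
    have key : ∀ x ∈ Nσ, ∃ (z : E) (t r : ℝ), 0 < t ∧ 0 < r ∧ ‖z‖ ≤ 1 + ‖f x‖ ∧
        (∀ x' ∈ Metric.ball x t ∩ Q, ‖f x' - f x‖ ≤ min (r/2) (1/2)) ∧
        (∀ ξ : E, ‖ξ - f x‖ ≤ r → ε/2 ≤ fderiv ℝ I ξ z) := by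
      intro x hx
      have hb := hband x hx
      have hcon' := hconn (f x) hb
      have hys : (0:ℝ) < 1 + ‖f x‖ := by positivity
      have hopn : ε/(1+‖f x‖) < ‖fderiv ℝ I (f x)‖ := by
        rw [div_lt_iff₀ hys]
        nlinarith
      obtain ⟨u₁, hu₁, hval⟩ :=
        ContinuousLinearMap.exists_lt_apply_of_lt_opNorm (fderiv ℝ I (f x)) hopn
      set z₀ : E := if 0 ≤ fderiv ℝ I (f x) u₁ then (1+‖f x‖) • u₁ else -((1+‖f x‖) • u₁)
        with hz₀def
      have hεr : ε = (ε/(1+‖f x‖)) * (1+‖f x‖) := by field_simp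
      have hz₀val : ε < fderiv ℝ I (f x) z₀ := by
        rcases le_or_gt 0 (fderiv ℝ I (f x) u₁) with h | h
        · rw [hz₀def, if_pos h, _root_.map_smul, _root_.smul_eq_mul]
          have habs : ‖fderiv ℝ I (f x) u₁‖ = fderiv ℝ I (f x) u₁ := by
            rw [Real.norm_eq_abs, abs_of_nonneg h]
          rw [hεr]
          rw [habs] at hval
          nlinarith
        · rw [hz₀def, if_neg (not_le.2 h), map_neg, _root_.map_smul, _root_.smul_eq_mul]
          have habs : ‖fderiv ℝ I (f x) u₁‖ = -(fderiv ℝ I (f x) u₁) := by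
            rw [Real.norm_eq_abs, abs_of_neg h]
          rw [hεr]
          rw [habs] at hval
          nlinarith
      have hz₀norm : ‖z₀‖ ≤ 1 + ‖f x‖ := by
        rcases le_or_gt 0 (fderiv ℝ I (f x) u₁) with h | h
        · rw [hz₀def, if_pos h, norm_smul, Real.norm_eq_abs, abs_of_pos hys]
          nlinarith [norm_nonneg u₁]
        · rw [hz₀def, if_neg (not_le.2 h), norm_neg, norm_smul, Real.norm_eq_abs,
            abs_of_pos hys]
          nlinarith [norm_nonneg u₁]
      have hcAt : ContinuousAt (fderiv ℝ I) (f x) := hI'cont.continuousAt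
      obtain ⟨r₀, hr₀pos, hr₀⟩ := Metric.continuousAt_iff.1 hcAt
        (ε/(2*(1+‖f x‖))) (by positivity)
      have hcw : ContinuousWithinAt f Q x := hfΓ.1 x (hNσQ hx)
      obtain ⟨t, htpos, ht⟩ := Metric.continuousWithinAt_iff.1 hcw (min (r₀/4) (1/2))
        (lt_min (by positivity) one_half_pos)
      refine ⟨z₀, t, r₀/2, htpos, by positivity, hz₀norm, ?_, ?_⟩
      · rintro x' ⟨hx'ball, hx'Q⟩
        have h1 := ht hx'Q (mem_ball.1 hx'ball)
        rw [dist_eq_norm] at h1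
        have hquarter : r₀/2/2 = r₀/4 := by ring
        rw [hquarter]
        exact h1.le
      · intro ξ hξ
        have h1 : dist ξ (f x) < r₀ := by
          rw [dist_eq_norm]
          linarith
        have h2 := hr₀ h1
        rw [dist_eq_norm] at h2
        have h3 : ‖(fderiv ℝ I ξ - fderiv ℝ I (f x)) z₀‖ ≤
            ‖fderiv ℝ I ξ - fderiv ℝ I (f x)‖ * ‖z₀‖ := ContinuousLinearMap.le_opNorm _ _
        have h4 : ‖fderiv ℝ I ξ - fderiv ℝ I (f x)‖ * ‖z₀‖ ≤ (ε/(2*(1+‖f x‖))) * (1+‖f x‖) := by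
          apply mul_le_mul h2.le hz₀norm (norm_nonneg _) (by positivity)
        have h5 : (ε/(2*(1+‖f x‖))) * (1+‖f x‖) = ε/2 := by field_simp
        have h6 : (fderiv ℝ I ξ - fderiv ℝ I (f x)) z₀ =
            fderiv ℝ I ξ z₀ - fderiv ℝ I (f x) z₀ := ContinuousLinearMap.sub_apply _ _ _
        have h7 : |fderiv ℝ I ξ z₀ - fderiv ℝ I (f x) z₀| ≤ ε/2 := by
          rw [← Real.norm_eq_abs, ← h6]
          linarith
        have := abs_le.1 h7
        linarith
    choose! zf tf rf htpos hrpos hznorm hball hxi using key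
    -- finite subcover
    obtain ⟨Y0, hY0Nσ, hY0fin, hY0cov⟩ := hNσcomp.elim_finite_subcover_image
      (fun x _ => isOpen_ball)
      (fun x hx => mem_iUnion₂.2 ⟨x, hx, mem_ball_self (htpos x hx)⟩)
    set T : Finset E := hY0fin.toFinset with hTdef
    have hTmem : ∀ i ∈ T, i ∈ Nσ := fun i hi => hY0Nσ (hY0fin.mem_toFinset.1 hi)
    have hTne : T.Nonempty := by
      obtain ⟨x, hx⟩ := hNσne
      obtain ⟨i, hiY0, _⟩ := mem_iUnion₂.1 (hY0cov hx)
      exact ⟨i, hY0fin.mem_toFinset.2 hiY0⟩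
    set rmin : ℝ := T.inf' hTne rf with hrmindef
    have hrminpos : 0 < rmin := by
      rw [hrmindef, Finset.lt_inf'_iff]
      exact fun i hi => hrpos i (hTmem i hi)
    have hrminle : ∀ i ∈ T, rmin ≤ rf i := fun i hi => Finset.inf'_le rf hi
    -- partition of unity
    set ψ : E → E → ℝ := fun i x' => max (tf i - dist x' i) 0 with hψdef
    have hψcont : ∀ i, Continuous (ψ i) := fun i =>
      ((continuous_const.sub (continuous_id.dist continuous_const)).max continuous_const)
    have hψnn : ∀ i x', 0 ≤ ψ i x' := fun i x' => le_max_right _ _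
    have hψpos : ∀ i x', ψ i x' ≠ 0 → dist x' i < tf i := by
      intro i x' h
      by_contra hc
      push_neg at hc
      apply h
      rw [hψdef]
      simp only
      rw [max_eq_right (by linarith)]
    set Sψ : E → ℝ := fun x' => ∑ i ∈ T, ψ i x' with hSψdef
    have hScont : Continuous Sψ := continuous_finset_sum _ (fun i _ => hψcont i)
    have hSnn : ∀ x', 0 ≤ Sψ x' := fun x' => Finset.sum_nonneg fun i _ => hψnn i x'
    have hSpos : ∀ x ∈ Nσ, 0 < Sψ x := by
      intro x hx
      obtain ⟨i, hiY0, hiball⟩ := mem_iUnion₂.1 (hY0cov hx)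
      apply Finset.sum_pos' (fun j _ => hψnn j x)
      refine ⟨i, hY0fin.mem_toFinset.2 hiY0, ?_⟩
      have : dist x i < tf i := mem_ball.1 hiball
      rw [hψdef]
      simp only
      rw [max_eq_left (by linarith)]
      linarith
    have hSQcomp : IsCompact (Sψ '' Nσ) := hNσcomp.image hScont
    set m₀ : ℝ := sInf (Sψ '' Nσ) with hm₀def
    have hm₀mem : m₀ ∈ Sψ '' Nσ := hSQcomp.sInf_mem (hNσne.image _)
    have hm₀pos : 0 < m₀ := by
      obtain ⟨x₁, hx₁, hx₁v⟩ := hm₀mem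
      rw [← hx₁v]
      exact hSpos x₁ hx₁
    have hm₀le : ∀ x ∈ Nσ, m₀ ≤ Sψ x := fun x hx =>
      csInf_le hSQcomp.bddBelow ⟨x, hx, rfl⟩
    set lam : E → E → ℝ := fun i x' => ψ i x' / max (Sψ x') m₀ with hlamdef
    have hdenpos : ∀ x', 0 < max (Sψ x') m₀ := fun x' => lt_max_of_lt_right hm₀pos
    have hlamnn : ∀ i x', 0 ≤ lam i x' := fun i x' =>
      div_nonneg (hψnn i x') (hdenpos x').le
    have hlamcont : ∀ i, Continuous (lam i) := fun i =>
      (hψcont i).div (hScont.max continuous_const) (fun x' => (hdenpos x').ne')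
    have hlamsum_le : ∀ x', ∑ i ∈ T, lam i x' ≤ 1 := by
      intro x'
      rw [hlamdef]
      simp only
      rw [← Finset.sum_div]
      rw [div_le_one (hdenpos x')]
      exact le_max_left _ _
    have hlamsum_eq : ∀ x ∈ Nσ, ∑ i ∈ T, lam i x = 1 := by
      intro x hx
      rw [hlamdef]
      simp only
      rw [← Finset.sum_div, max_eq_left (hm₀le x hx)]
      exact div_self (hSpos x hx).ne'
    have hlam_ball : ∀ i x', lam i x' ≠ 0 → dist x' i < tf i := by
      intro i x' h
      apply hψpos i x'
      intro hc
      rw [hlamdef] at h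
      simp only at h
      rw [hc, zero_div] at h
      exact h rfl
    -- the cutoff function
    set χ : E → ℝ := fun x' => max 0 (min 1 ((I (f x') - (φ f - ε/2)) / (ε/4))) with hχdef
    have hχcont : ContinuousOn χ Q := by
      have houter : Continuous (fun t : ℝ => max 0 (min 1 t)) :=
        continuous_const.max (continuous_const.min continuous_id)
      exact houter.comp_continuousOn
        (((hI.continuous.comp_continuousOn hfΓ.1).sub continuousOn_const).div_const _)
    have hχ01 : ∀ x', 0 ≤ χ x' ∧ χ x' ≤ 1 := fun x' =>
      ⟨le_max_left _ _, max_le (by linarith) (min_le_left _ _)⟩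
    have hχ0 : ∀ x', I (f x') ≤ φ f - ε/2 → χ x' = 0 := by
      intro x' h
      rw [hχdef]
      simp only
      have h1 : (I (f x') - (φ f - ε/2)) / (ε/4) ≤ 0 :=
        div_nonpos_of_nonpos_of_nonneg (by linarith) (by positivity)
      rw [max_eq_left ((min_le_right _ _).trans h1)]
    have hχ1 : ∀ x', φ f - ε/4 ≤ I (f x') → χ x' = 1 := by
      intro x' h
      rw [hχdef]
      simp only
      have h1 : (1:ℝ) ≤ (I (f x') - (φ f - ε/2)) / (ε/4) := by
        rw [le_div_iff₀ (by positivity : (0:ℝ) < ε/4)]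
        linarith
      rw [min_eq_left h1, max_eq_right zero_le_one]
    have hχpos : ∀ x', χ x' ≠ 0 → φ f - ε/2 < I (f x') := by
      intro x' h
      by_contra hc
      push_neg at hc
      exact h (hχ0 x' hc)
    -- the perturbation vector field
    set v : E → E := fun x' => χ x' • ∑ i ∈ T, lam i x' • zf i with hvdef
    have hvcont : ContinuousOn v Q :=
      hχcont.smul (continuous_finset_sum _
        (fun i _ => (hlamcont i).smul continuous_const)).continuousOn
    have hvb : ∀ x ∈ Q, ‖v x‖ ≤ 2*(1+‖f x‖) := by
      intro x hx
      by_cases hχx : χ x = 0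
      · rw [hvdef]
        simp only
        rw [hχx, zero_smul, norm_zero]
        positivity
      · have hxNσ : x ∈ Nσ := ⟨hx, (hχpos x hχx).le⟩
        have hzb : ∀ i ∈ T, lam i x * ‖zf i‖ ≤ lam i x * ((3/2)*(1+‖f x‖)) := by
          intro i hi
          rcases eq_or_ne (lam i x) 0 with h0 | h0
          · rw [h0, zero_mul, zero_mul]
          · apply mul_le_mul_of_nonneg_left ?_ (hlamnn i x)
            have hiNσ := hTmem i hi
            have hxball : x ∈ Metric.ball i (tf i) ∩ Q :=
              ⟨mem_ball.2 (hlam_ball i x h0), hx⟩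
            have hfxfi : ‖f x - f i‖ ≤ min (rf i/2) (1/2) := hball i hiNσ x hxball
            have h1 : ‖f i‖ - ‖f x‖ ≤ ‖f x - f i‖ := by
              rw [norm_sub_rev]
              exact norm_sub_norm_le _ _
            have h2 : ‖f x - f i‖ ≤ 1/2 := hfxfi.trans (min_le_right _ _)
            have h3 := hznorm i hiNσ
            have h4 : (0:ℝ) ≤ ‖f x‖ := norm_nonneg _
            nlinarith
        have hnorm_sum : ‖∑ i ∈ T, lam i x • zf i‖ ≤ (3/2)*(1+‖f x‖) := by
          calc ‖∑ i ∈ T, lam i x • zf i‖ ≤ ∑ i ∈ T, ‖lam i x • zf i‖ :=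
                norm_sum_le _ _
            _ = ∑ i ∈ T, lam i x * ‖zf i‖ := by
                apply Finset.sum_congr rfl
                intro i hi
                rw [norm_smul, Real.norm_eq_abs, abs_of_nonneg (hlamnn i x)]
            _ ≤ ∑ i ∈ T, lam i x * ((3/2)*(1+‖f x‖)) := Finset.sum_le_sum hzb
            _ = (∑ i ∈ T, lam i x) * ((3/2)*(1+‖f x‖)) := by rw [← Finset.sum_mul]
            _ ≤ 1 * ((3/2)*(1+‖f x‖)) := by
                apply mul_le_mul_of_nonneg_right (hlamsum_le x)
                positivity
            _ = (3/2)*(1+‖f x‖) := one_mul _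
        rw [hvdef]
        simp only
        rw [norm_smul, Real.norm_eq_abs, abs_of_nonneg (hχ01 x).1]
        have h5 := (hχ01 x).2
        have h4 := (hχ01 x).1
        have h7 := norm_nonneg (∑ i ∈ T, lam i x • zf i)
        nlinarith [norm_nonneg (f x)]
    -- choice of δ
    set δ : ℝ := min (1/4) (min (δ₁/(2*(1+Nf))) (rmin/(4*(1+Nf)))) with hδdef
    have hNf1 : (0:ℝ) < 1 + Nf := by linarith
    have hδpos : 0 < δ := by
      rw [hδdef]
      apply lt_min (by norm_num)
      exact lt_min (by positivity) (by positivity)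
    have hδ14 : δ ≤ 1/4 := min_le_left _ _
    have hδδ₁ : 2*δ*(1+Nf) ≤ δ₁ := by
      have h1 : δ ≤ δ₁/(2*(1+Nf)) := le_trans (min_le_right _ _) (min_le_left _ _)
      rw [le_div_iff₀ (by positivity)] at h1
      nlinarith
    have hδrmin : 2*δ*(1+Nf) ≤ rmin/2 := by
      have h1 : δ ≤ rmin/(4*(1+Nf)) := le_trans (min_le_right _ _) (min_le_right _ _)
      rw [le_div_iff₀ (by positivity)] at h1
      nlinarith
    -- the perturbed map
    set g : E → E := fun x' => f x' - δ • v x' with hgdef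
    have hgΓ : g ∈ Γ := by
      constructor
      · exact hfΓ.1.sub (hvcont.const_smul δ)
      · intro x hx
        have hfb : f x = h₀ x := hfΓ.2 x hx
        have homega : I (f x) ≤ ω := by rw [hfb]; exact hωb x hx
        have hlt : I (f x) ≤ φ f - ε/2 := by
          have h1 : α - ε/2 ≤ φ f - ε/2 := by linarith [hαφ f hfΓ]
          have h2 : ω < α - ε/2 := by linarith
          linarith
        have hχx : χ x = 0 := hχ0 x hlt
        rw [hgdef]
        simp only
        rw [hvdef]
        simp only
        rw [hχx, zero_smul, smul_zero, sub_zero, hfb]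
    -- uniform smallness of the move
    have hmove : ∀ x ∈ Q, ‖g x - f x‖ ≤ 2*δ*(1+Nf) := by
      intro x hx
      have h1 : g x - f x = -(δ • v x) := by rw [hgdef]; simp only; abel
      rw [h1, norm_neg, norm_smul, Real.norm_eq_abs, abs_of_pos hδpos]
      have h2 := hvb x hx
      have h3 := hNf x hx
      nlinarith
    -- decrease estimate
    have hdec : ∀ x ∈ Q, I (g x) ≤ φ f - min (δ*(ε/2)) (ε/4) := by
      intro x hx
      have hminle1 : min (δ*(ε/2)) (ε/4) ≤ δ*(ε/2) := min_le_left _ _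
      have hminle2 : min (δ*(ε/2)) (ε/4) ≤ ε/4 := min_le_right _ _
      by_cases hχx : χ x = 0
      · have hv0 : v x = 0 := by rw [hvdef]; simp only; rw [hχx, zero_smul]
        have hg : g x = f x := by rw [hgdef]; simp only; rw [hv0, smul_zero, sub_zero]
        rw [hg]
        have hIf : ¬ (φ f - ε/4 ≤ I (f x)) := fun hcon'' => by
          rw [hχ1 x hcon''] at hχx; exact one_ne_zero hχx
        push_neg at hIf
        linarith
      · have hxNσ : x ∈ Nσ := ⟨hx, (hχpos x hχx).le⟩
        -- mean value theorem along the segment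
        have hdiff : Differentiable ℝ I := hI.differentiable one_ne_zero
        have hphi : ∀ t : ℝ, HasDerivAt (fun s : ℝ => I (f x - s • v x))
            (fderiv ℝ I (f x - t • v x) (-(v x))) t := by
          intro t
          have h1 : HasDerivAt (fun s : ℝ => f x - s • v x) (-(v x)) t := by
            have h2 : HasDerivAt (fun s : ℝ => s • v x) (v x) t := by
              simpa using (hasDerivAt_id t).smul_const (v x)
            simpa using h2.const_sub (f x)
          exact (hdiff (f x - t • v x)).hasFDerivAt.comp_hasDerivAt t h1
        obtain ⟨τ, hτmem, hτ⟩ := exists_hasDerivAt_eq_slope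
          (fun s : ℝ => I (f x - s • v x))
          (fun t : ℝ => fderiv ℝ I (f x - t • v x) (-(v x))) hδpos
          (Continuous.continuousOn (by
            apply hI.continuous.comp
            exact continuous_const.sub (continuous_id.smul continuous_const)))
          (fun t _ => hphi t)
        set ξ : E := f x - τ • v x with hξdef
        have hgval : I (g x) = I (f x) - δ * (fderiv ℝ I ξ (v x)) := by
          have h1 : fderiv ℝ I ξ (-(v x)) =
              (I (f x - δ • v x) - I (f x - (0:ℝ) • v x))/(δ - 0) := hτ
          rw [map_neg] at h1
          rw [zero_smul, sub_zero, sub_zero] at h1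
          have h2 : I (f x - δ • v x) - I (f x) = -(δ * fderiv ℝ I ξ (v x)) := by
            have h3 : (I (f x - δ • v x) - I (f x))/δ = -(fderiv ℝ I ξ (v x)) := by
              rw [← h1]
            field_simp at h3
            linarith
          have h4 : g x = f x - δ • v x := by rw [hgdef]
          rw [h4]
          linarith
        -- ξ is close to f x
        have hvxb : ‖v x‖ ≤ 2*(1+‖f x‖) := hvb x hx
        have hτb : ‖ξ - f x‖ ≤ 2*δ*(1+Nf) := by
          have h1 : ξ - f x = -(τ • v x) := by rw [hξdef]; abel
          rw [h1, norm_neg, norm_smul, Real.norm_eq_abs,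
            abs_of_pos hτmem.1]
          have h2 := hNf x hx
          have h3 := hτmem.2
          nlinarith [norm_nonneg (v x)]
        -- active indices give a good derivative
        have hactive : ∀ i ∈ T, lam i x * (ε/2) ≤ lam i x * (fderiv ℝ I ξ (zf i)) := by
          intro i hi
          rcases eq_or_ne (lam i x) 0 with h0 | h0
          · rw [h0, zero_mul, zero_mul]
          · have hiNσ := hTmem i hi
            have hxball : x ∈ Metric.ball i (tf i) ∩ Q :=
              ⟨mem_ball.2 (hlam_ball i x h0), hx⟩
            have hfxfi : ‖f x - f i‖ ≤ min (rf i/2) (1/2) := hball i hiNσ x hxball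
            have hξfi : ‖ξ - f i‖ ≤ rf i := by
              have h1 : ξ - f i = (ξ - f x) + (f x - f i) := by abel
              have h2 := norm_add_le (ξ - f x) (f x - f i)
              rw [← h1] at h2
              have h3 : ‖f x - f i‖ ≤ rf i/2 := hfxfi.trans (min_le_left _ _)
              have h4 := hrminle i hi
              linarith
            exact mul_le_mul_of_nonneg_left (hxi i hiNσ ξ hξfi) (hlamnn i x)
        have hsum : (ε/2) * (∑ i ∈ T, lam i x) ≤ fderiv ℝ I ξ (∑ i ∈ T, lam i x • zf i) := by
          rw [map_sum]
          have h1 : ∀ i ∈ T, fderiv ℝ I ξ (lam i x • zf i) = lam i x * fderiv ℝ I ξ (zf i) := by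
            intro i _
            rw [_root_.map_smul, _root_.smul_eq_mul]
          rw [Finset.sum_congr rfl h1]
          rw [Finset.mul_sum]
          apply Finset.sum_le_sum
          intro i hi
          rw [mul_comm]
          exact hactive i hi
        have hDsum : fderiv ℝ I ξ (v x) = χ x * fderiv ℝ I ξ (∑ i ∈ T, lam i x • zf i) := by
          rw [hvdef]
          simp only
          rw [_root_.map_smul, _root_.smul_eq_mul]
        rcases le_or_gt (φ f - ε/4) (I (f x)) with hc1 | hc1
        · have hχ1x : χ x = 1 := hχ1 x hc1
          have hsum1 : ∑ i ∈ T, lam i x = 1 := hlamsum_eq x hxNσ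
          have hDvx : ε/2 ≤ fderiv ℝ I ξ (v x) := by
            rw [hDsum, hχ1x, one_mul]
            calc ε/2 = (ε/2) * 1 := (mul_one _).symm
              _ = (ε/2) * (∑ i ∈ T, lam i x) := by rw [hsum1]
              _ ≤ _ := hsum
          rw [hgval]
          have hIfx : I (f x) ≤ φ f := hφub f hfΓ x hx
          have h5 : δ*(ε/2) ≤ δ * fderiv ℝ I ξ (v x) :=
            mul_le_mul_of_nonneg_left hDvx hδpos.le
          linarith
        · have hD0 : 0 ≤ fderiv ℝ I ξ (v x) := by
            rw [hDsum]
            apply mul_nonneg (hχ01 x).1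
            have h1 : 0 ≤ (ε/2) * (∑ i ∈ T, lam i x) := by
              apply mul_nonneg (by positivity)
              exact Finset.sum_nonneg fun i _ => hlamnn i x
            linarith [hsum]
          rw [hgval]
          have h5 : 0 ≤ δ * fderiv ℝ I ξ (v x) := mul_nonneg hδpos.le hD0
          linarith
    -- the dd-distance between f and g is small
    have hddfg : dd f g ≤ 4*δ := by
      apply csSup_le ((hQne).image _)
      rintro y ⟨x, hx, rfl⟩
      have hvxb := hvb x hx
      have hfg : ‖f x - g x‖ = δ * ‖v x‖ := by
        have h1 : f x - g x = δ • v x := by rw [hgdef]; simp only; abel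
        rw [h1, norm_smul, Real.norm_eq_abs, abs_of_pos hδpos]
      have hgxlb : ‖f x‖ - δ*‖v x‖ ≤ ‖g x‖ := by
        have h1 := norm_sub_norm_le (f x) (g x)
        rw [hfg] at h1
        linarith
      have hδv : δ*‖v x‖ ≤ (1/2)*(1+‖f x‖) := by nlinarith [norm_nonneg (v x)]
      have hminb : (1/2)*(1+‖f x‖) ≤ 1 + min ‖f x‖ ‖g x‖ := by
        rcases min_cases ‖f x‖ ‖g x‖ with ⟨hm, _⟩ | ⟨hm, _⟩ <;> rw [hm] <;>
          nlinarith [norm_nonneg (f x)]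
      calc chainD (f x) (g x) ≤ seg (f x) (g x) := chainD_le_seg _ _
        _ ≤ 4*δ := by
            rw [seg, div_le_iff₀ (one_add_min_pos _ _)]
            rw [hfg]
            nlinarith [norm_nonneg (v x), norm_nonneg (f x)]
    -- contradiction with Ekeland's inequality
    have hEkg := hEk g hgΓ
    have hφg : φ g ≤ φ f - δ*(ε/2) := by
      have hminval : min (δ*(ε/2)) (ε/4) = δ*(ε/2) := by
        apply min_eq_left
        nlinarith
      apply csSup_le (himne g)
      rintro y ⟨x, hx, rfl⟩
      have := hdec x hx
      rw [hminval] at this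
      exact this
    have hddnn' : 0 ≤ dd f g := hddnn f hfΓ g hgΓ
    have hmul : (ε/16) * dd f g ≤ (ε/16) * (4*δ) :=
      mul_le_mul_of_nonneg_left hddfg (by positivity)
    nlinarith
  -- assemble the Cerami sequence
  refine ⟨c, hαc, rfl, ?_⟩
  have hgap : 0 < (α - ω)/2 := by linarith
  have hseq : ∀ n : ℕ, ∃ uu : E, |I uu - c| ≤ min ((α-ω)/2) (1/(n+1)) ∧
      (1+‖uu‖)*‖fderiv ℝ I uu‖ ≤ min ((α-ω)/2) (1/(n+1)) := by
    intro n
    exact main _ (lt_min hgap (by positivity)) (min_le_left _ _)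
  choose uu huu1 huu2 using hseq
  have hinv : Tendsto (fun n : ℕ => 1/((n:ℝ)+1)) atTop (𝓝 0) :=
    tendsto_one_div_add_atTop_nhds_zero_nat
  refine ⟨uu, ?_, ?_⟩
  · rw [tendsto_iff_dist_tendsto_zero]
    apply squeeze_zero (fun n => dist_nonneg) (fun n => ?_) hinv
    calc dist (I (uu n)) c = |I (uu n) - c| := Real.dist_eq _ _
      _ ≤ min ((α-ω)/2) (1/(n+1)) := huu1 n
      _ ≤ 1/(n+1) := min_le_right _ _
  · apply squeeze_zero (fun n => ?_) (fun n => ?_) hinv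
    · positivity
    · exact (huu2 n).trans (min_le_right _ _)
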